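/- arXiv:1410.6361 — 8 statements merged into one kernel-verified Lean document; each statement's English description precedes it below -/
import Mathlib

section
/- Sequential continuity implies Spector's condition: if for all φ : (ℕ → X) → ℕ and all α : ℕ → X there exists N such that for all β agreeing with α on the first N values, φ(α) = φ(β), then for all φ and α there exists n such that φ(extension of the first n values of α by a default element) < n. -/
universe u

theorem stmt2 {X : Type u} (x0 : X)
    (hcont : ∀ (φ : (ℕ → X) → ℕ) (α : ℕ → X), ∃ N, ∀ β : ℕ → X,
      (∀ i < N, α i = β i) → φ α = φ β) :
    ∀ (φ : (ℕ → X) → ℕ) (α : ℕ → X),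
      ∃ n, φ (fun i => if i < n then α i else x0) < n := by
  intro φ α
  obtain ⟨N, hN⟩ := hcont φ α
  refine ⟨max N (φ α + 1), ?_⟩
  have h : φ α = φ (fun i => if i < max N (φ α + 1) then α i else x0) := by
    apply hN
    intro i hi
    simp [lt_of_lt_of_le hi (le_max_left _ _)]
  rw [← h]
  exact lt_of_lt_of_le (Nat.lt_succ_self _) (le_max_right _ _)
end

section
/- A finite partial function u : ℕ →. X with finite domain is a φ-thread (i.e. u equals its own φ-thread of length |dom(u)|) if and only if for all i ≤ |dom(u)|, the φ-thread [u]_i of u of length i equals the partial function defined exactly at the points n_{φ,0}, …, n_{φ,i−1} with values u(n_{φ,j}), where the n_{φ,j} are pairwise distinct and all lie in dom(u). -/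
open scoped Classical

universe u

/-- Domain of a partial function `ℕ → Option X`. -/
def dom {X : Type u} (f : ℕ → Option X) : Set ℕ := {n | f n ≠ none}

/-- Canonical total extension of a partial function by a default element. -/
def ext {X : Type u} (x0 : X) (f : ℕ → Option X) : ℕ → X := fun n => (f n).getD x0

/-- The partial function defined only at `n`, with value `x`. -/
def single {X : Type u} (n : ℕ) (x : X) : ℕ → Option X :=
  fun m => if m = n then some x else none

/-- Left-biased merge `u @ v` of two partial functions. -/
def merge {X : Type u} (f g : ℕ → Option X) : ℕ → Option X :=
  fun n => (f n).elim (g n) some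

/-- Update `u ⊕ (n, x)`: keeps `u`'s value where defined, adds `x` at `n`. -/
def upd {X : Type u} (f : ℕ → Option X) (n : ℕ) (x : X) : ℕ → Option X :=
  merge f (single n x)

/-- Extension order `u ⊑ v`. -/
def sub {X : Type u} (f g : ℕ → Option X) : Prop :=
  ∀ n x, f n = some x → g n = some x

/-- The φ-thread of a partial function `u` of length `i`. -/
def threadP {X : Type u} (x0 : X) (φ : (ℕ → X) → ℕ) (f : ℕ → Option X) :
    ℕ → ℕ → Option X
  | 0 => fun _ => none
  | i + 1 =>
    let v := threadP x0 φ f i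
    let n := φ (ext x0 v)
    match f n with
    | some x => upd v n x
    | none => v

/-- The φ-thread of a total function `α` of length `i`. -/
def threadT {X : Type u} (x0 : X) (φ : (ℕ → X) → ℕ) (α : ℕ → X) :
    ℕ → ℕ → Option X
  | 0 => fun _ => none
  | i + 1 =>
    let v := threadT x0 φ α i
    let n := φ (ext x0 v)
    upd v n (α n)

/-- `S_φ(u)`: `u` is a φ-thread. -/
def isThread {X : Type u} (x0 : X) (φ : (ℕ → X) → ℕ) (f : ℕ → Option X) : Prop :=
  f = threadP x0 φ f (dom f).ncard

/-- Bounded search: least `i ≤ b` with `p i`, else `b`. -/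
noncomputable def mu (b : ℕ) (p : ℕ → Prop) : ℕ :=
  if h : ∃ i, i ≤ b ∧ p i then Nat.find h else b

namespace Stmt3Aux

variable {X : Type u}

lemma upd_apply (v : ℕ → Option X) (n : ℕ) (x : X) (m : ℕ) :
    upd v n x m = if m = n then (v n).elim (some x) some else v m := by
  by_cases h : m = n
  · subst h; simp [upd, merge, single]
  · simp only [upd, merge, single, if_neg h]
    cases v m <;> simp

lemma mem_dom {f : ℕ → Option X} {m : ℕ} : m ∈ dom f ↔ f m ≠ none := Iff.rfl

lemma dom_upd (v : ℕ → Option X) (n : ℕ) (x : X) :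
    dom (upd v n x) = insert n (dom v) := by
  ext m
  by_cases h : m = n
  · subst h
    simp only [mem_dom, upd_apply, if_pos rfl, Set.mem_insert_iff, true_or, iff_true]
    cases v m <;> simp
  · simp [mem_dom, upd_apply, h, Set.mem_insert_iff]

lemma upd_eq_self {v : ℕ → Option X} {n : ℕ} (x : X) (h : v n ≠ none) :
    upd v n x = v := by
  funext m
  rw [upd_apply]
  by_cases hm : m = n
  · subst hm
    cases hv : v m
    · exact absurd hv h
    · simp [hv]
  · simp [hm]

/-- One step of the thread construction. -/
noncomputable def step (x0 : X) (φ : (ℕ → X) → ℕ) (u : ℕ → Option X)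
    (v : ℕ → Option X) : ℕ → Option X :=
  match u (φ (ext x0 v)) with
  | some x => upd v (φ (ext x0 v)) x
  | none => v

lemma threadP_succ (x0 : X) (φ : (ℕ → X) → ℕ) (u : ℕ → Option X) (i : ℕ) :
    threadP x0 φ u (i + 1) = step x0 φ u (threadP x0 φ u i) := rfl

lemma threadP_succ_some {x0 : X} {φ : (ℕ → X) → ℕ} {u : ℕ → Option X} {i : ℕ} {x : X}
    (h : u (φ (ext x0 (threadP x0 φ u i))) = some x) :
    threadP x0 φ u (i + 1) =
      upd (threadP x0 φ u i) (φ (ext x0 (threadP x0 φ u i))) x := by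
  rw [threadP_succ, step, h]

lemma threadP_succ_none {x0 : X} {φ : (ℕ → X) → ℕ} {u : ℕ → Option X} {i : ℕ}
    (h : u (φ (ext x0 (threadP x0 φ u i))) = none) :
    threadP x0 φ u (i + 1) = threadP x0 φ u i := by
  rw [threadP_succ, step, h]

lemma thread_sub (x0 : X) (φ : (ℕ → X) → ℕ) (u : ℕ → Option X) :
    ∀ i, sub (threadP x0 φ u i) u := by
  intro i
  induction i with
  | zero => intro n a h; simp [threadP] at h
  | succ i ih =>
    intro m a hm
    set n := φ (ext x0 (threadP x0 φ u i)) with hn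
    cases hu : u n with
    | none => exact ih m a ((threadP_succ_none hu) ▸ hm)
    | some x =>
      rw [threadP_succ_some hu, upd_apply] at hm
      by_cases hmn : m = n
      · rw [if_pos hmn] at hm
        cases hv : threadP x0 φ u i n with
        | none => rw [hv] at hm; simp at hm; rw [hmn, hu, hm]
        | some b =>
          rw [hv] at hm; simp at hm
          exact ih m a (by rw [hmn, hv, hm])
      · rw [if_neg hmn] at hm; exact ih m a hm

lemma thread_mono_succ (x0 : X) (φ : (ℕ → X) → ℕ) (u : ℕ → Option X) (i : ℕ) :
    sub (threadP x0 φ u i) (threadP x0 φ u (i + 1)) := by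
  intro m a hm
  set n := φ (ext x0 (threadP x0 φ u i)) with hn
  cases hu : u n with
  | none => rw [threadP_succ_none hu]; exact hm
  | some x =>
    rw [threadP_succ_some hu, upd_apply]
    by_cases hmn : m = n
    · subst hmn; rw [if_pos rfl, hm]; rfl
    · rw [if_neg hmn]; exact hm

lemma thread_mono (x0 : X) (φ : (ℕ → X) → ℕ) (u : ℕ → Option X) {j k : ℕ}
    (hjk : j ≤ k) : sub (threadP x0 φ u j) (threadP x0 φ u k) := by
  induction k with
  | zero =>
    have hj0 : j = 0 := Nat.le_zero.mp hjk
    subst hj0; exact fun n x h => h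
  | succ k ih =>
    rcases Nat.lt_or_ge j (k + 1) with h | h
    · exact fun n x hx => thread_mono_succ x0 φ u k n x (ih (Nat.lt_succ_iff.mp h) n x hx)
    · have : j = k + 1 := le_antisymm hjk h
      subst this; exact fun n x h => h

lemma thread_dom_mono (x0 : X) (φ : (ℕ → X) → ℕ) (u : ℕ → Option X) {j k : ℕ}
    (hjk : j ≤ k) : dom (threadP x0 φ u j) ⊆ dom (threadP x0 φ u k) := by
  intro m hm
  rw [mem_dom] at hm ⊢
  cases hv : threadP x0 φ u j m with
  | none => exact absurd hv hm
  | some a => rw [thread_mono x0 φ u hjk m a hv]; simp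

lemma thread_card (x0 : X) (φ : (ℕ → X) → ℕ) (u : ℕ → Option X) (i : ℕ) :
    (dom (threadP x0 φ u i)).Finite ∧ (dom (threadP x0 φ u i)).ncard ≤ i := by
  induction i with
  | zero =>
    have : dom (threadP x0 φ u 0) = ∅ := by
      ext m; simp [mem_dom, threadP]
    rw [this]; simp
  | succ i ih =>
    cases hu : u (φ (ext x0 (threadP x0 φ u i))) with
    | none => rw [threadP_succ_none hu]; exact ⟨ih.1, ih.2.trans (Nat.le_succ i)⟩
    | some x =>
      rw [threadP_succ_some hu, dom_upd]
      refine ⟨ih.1.insert _, ?_⟩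
      exact (Set.ncard_insert_le _ _).trans (Nat.succ_le_succ ih.2)

lemma thread_stab (x0 : X) (φ : (ℕ → X) → ℕ) (u : ℕ → Option X) {j : ℕ}
    (h : threadP x0 φ u (j + 1) = threadP x0 φ u j) (k : ℕ) :
    threadP x0 φ u (j + k) = threadP x0 φ u j := by
  induction k with
  | zero => rfl
  | succ k ih =>
    have : j + (k + 1) = (j + k) + 1 := by omega
    rw [this, threadP_succ, ih, ← threadP_succ, h]

/-- If all search points are fresh and in `dom u` up to `i`, the thread has the
explicit form. -/
lemma thread_form (x0 : X) (φ : (ℕ → X) → ℕ) (u : ℕ → Option X) (i : ℕ)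
    (hkey : ∀ j < i, u (φ (ext x0 (threadP x0 φ u j))) ≠ none ∧
      threadP x0 φ u j (φ (ext x0 (threadP x0 φ u j))) = none) :
    threadP x0 φ u i =
      fun m => if ∃ j < i, φ (ext x0 (threadP x0 φ u j)) = m then u m else none := by
  induction i with
  | zero =>
    funext m
    simp [threadP]
  | succ i ih =>
    have ih' := ih (fun j hj => hkey j (Nat.lt_succ_of_lt hj))
    set n := φ (ext x0 (threadP x0 φ u i)) with hn
    obtain ⟨hu, hnone⟩ := hkey i (Nat.lt_succ_self i)
    cases hux : u n with
    | none => exact absurd hux hu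
    | some x =>
      rw [threadP_succ_some hux]
      funext m
      rw [upd_apply]
      by_cases hm : m = n
      · rw [if_pos hm, hnone]
        have hex : ∃ j < i + 1, φ (ext x0 (threadP x0 φ u j)) = m :=
          ⟨i, Nat.lt_succ_self i, hm.symm⟩
        simp only [if_pos hex]
        rw [hm, hux]
        rfl
      · rw [if_neg hm, ih']
        by_cases hex : ∃ j < i, φ (ext x0 (threadP x0 φ u j)) = m
        · have hex' : ∃ j < i + 1, φ (ext x0 (threadP x0 φ u j)) = m := by
            obtain ⟨j, hj, hje⟩ := hex
            exact ⟨j, Nat.lt_succ_of_lt hj, hje⟩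
          simp only [if_pos hex, if_pos hex']
        · have hex' : ¬ ∃ j < i + 1, φ (ext x0 (threadP x0 φ u j)) = m := by
            rintro ⟨j, hj, hje⟩
            rcases Nat.lt_succ_iff_lt_or_eq.mp hj with h | h
            · exact hex ⟨j, h, hje⟩
            · subst h; exact hm hje.symm
          simp only [if_neg hex, if_neg hex']

end Stmt3Aux

open Stmt3Aux in
theorem stmt3 {X : Type u} (x0 : X) (φ : (ℕ → X) → ℕ) (u : ℕ → Option X)
    (hfin : (dom u).Finite) :
    isThread x0 φ u ↔
      ∀ i ≤ (dom u).ncard,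
        (∀ j < i, ∀ k < i, j ≠ k →
          φ (ext x0 (threadP x0 φ u j)) ≠ φ (ext x0 (threadP x0 φ u k))) ∧
        (∀ j < i, φ (ext x0 (threadP x0 φ u j)) ∈ dom u) ∧
        threadP x0 φ u i =
          fun m => if ∃ j < i, φ (ext x0 (threadP x0 φ u j)) = m then u m else none := by
  set N := (dom u).ncard with hN
  constructor
  · intro h
    -- key freshness property
    have hkey : ∀ j < N, u (φ (ext x0 (threadP x0 φ u j))) ≠ none ∧
        threadP x0 φ u j (φ (ext x0 (threadP x0 φ u j))) = none := by
      intro j hj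
      by_contra hc
      have hfix : threadP x0 φ u (j + 1) = threadP x0 φ u j := by
        by_cases hu : u (φ (ext x0 (threadP x0 φ u j))) = none
        · exact threadP_succ_none hu
        · have hT : threadP x0 φ u j (φ (ext x0 (threadP x0 φ u j))) ≠ none := by
            intro hT
            exact hc ⟨hu, hT⟩
          cases hux : u (φ (ext x0 (threadP x0 φ u j))) with
          | none => exact absurd hux hu
          | some x => rw [threadP_succ_some hux]; exact upd_eq_self x hT
      have hNj : threadP x0 φ u N = threadP x0 φ u j := by
        have : N = j + (N - j) := by omega
        rw [this]; exact thread_stab x0 φ u hfix (N - j)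
      have hdomeq : dom u = dom (threadP x0 φ u j) := by
        rw [isThread] at h
        conv_lhs => rw [h]
        rw [hNj]
      have hcard := (thread_card x0 φ u j).2
      rw [← hdomeq] at hcard
      omega
    intro i hi
    have hkey' : ∀ j < i, u (φ (ext x0 (threadP x0 φ u j))) ≠ none ∧
        threadP x0 φ u j (φ (ext x0 (threadP x0 φ u j))) = none :=
      fun j hj => hkey j (lt_of_lt_of_le hj hi)
    refine ⟨?_, ?_, thread_form x0 φ u i hkey'⟩
    · -- distinctness
      have aux : ∀ j < i, ∀ k < i, j < k →
          φ (ext x0 (threadP x0 φ u j)) ≠ φ (ext x0 (threadP x0 φ u k)) := by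
        intro j hj k hk hjk heq
        have hformk := thread_form x0 φ u k
          (fun j' hj' => hkey' j' (hj'.trans hk))
        have h1 : threadP x0 φ u k (φ (ext x0 (threadP x0 φ u j))) ≠ none := by
          rw [hformk]
          have hex : ∃ j' < k, φ (ext x0 (threadP x0 φ u j')) =
              φ (ext x0 (threadP x0 φ u j)) := ⟨j, hjk, rfl⟩
          simp only [if_pos hex]
          exact (hkey' j hj).1
        rw [heq] at h1
        exact h1 (hkey' k hk).2
      intro j hj k hk hjk
      rcases Nat.lt_or_ge j k with h' | h'
      · exact aux j hj k hk h'
      · have h'' : k < j := lt_of_le_of_ne h' (Ne.symm hjk)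
        exact (aux k hk j hj h'').symm
    · intro j hj
      exact (hkey' j hj).1
  · intro H
    obtain ⟨hdist, hmem, hform⟩ := H N le_rfl
    -- the image set
    set S : Set ℕ := {m | ∃ j < N, φ (ext x0 (threadP x0 φ u j)) = m} with hS
    have hinj : Set.InjOn (fun j => φ (ext x0 (threadP x0 φ u j)))
        ↑(Finset.range N) := by
      intro j hj k hk heq
      simp only [Finset.coe_range, Set.mem_Iio] at hj hk
      by_contra hne
      exact hdist j hj k hk hne heq
    have hScard : S.ncard = N := by
      have hSeq : S = ↑((Finset.range N).image
          (fun j => φ (ext x0 (threadP x0 φ u j)))) := by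
        ext m
        simp [hS, eq_comm]
      rw [hSeq, Set.ncard_coe_finset,
        Finset.card_image_of_injOn (by simpa using hinj), Finset.card_range]
    have hSsub : S ⊆ dom u := by
      rintro m ⟨j, hj, rfl⟩
      exact hmem j hj
    have hSdom : S = dom u :=
      Set.eq_of_subset_of_ncard_le hSsub (by rw [hScard]) hfin
    rw [isThread]
    funext m
    rw [hform]
    by_cases hm : m ∈ dom u
    · have hmS : m ∈ S := hSdom ▸ hm
      obtain ⟨j, hj, hje⟩ := hmS
      have hex : ∃ j < N, φ (ext x0 (threadP x0 φ u j)) = m := ⟨j, hj, hje⟩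
      simp only [if_pos hex]
    · have hmS : ¬ ∃ j < N, φ (ext x0 (threadP x0 φ u j)) = m := by
        intro hex
        exact hm (hSdom ▸ (hex : m ∈ S))
      simp only [if_neg hmS]
      rw [mem_dom, not_not] at hm
      exact hm
end

section
/- If u ⊑ v are finite partial functions, u is a φ-thread (S_φ(u) holds), then the φ-threads of u and v coincide at all lengths j ≤ |dom(u)|: [u]_j = [v]_j. In particular [v]_{|dom(u)|} = u. -/
open scoped Classical

universe u

lemma dom_upd {X : Type u} (f : ℕ → Option X) (n : ℕ) (x : X) :
    dom (upd f n x) = insert n (dom f) := by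
  ext m
  simp only [dom, upd, merge, single, Set.mem_insert_iff, Set.mem_setOf_eq]
  cases h : f m <;> simp [h] <;> tauto

lemma threadP_stable {X : Type u} (x0 : X) (φ : (ℕ → X) → ℕ) (u : ℕ → Option X) (j : ℕ)
    (h : threadP x0 φ u (j+1) = threadP x0 φ u j) :
    ∀ i, j ≤ i → threadP x0 φ u i = threadP x0 φ u j := by
  intro i hi
  induction i, hi using Nat.le_induction with
  | base => rfl
  | succ i hi ih =>
    show threadP x0 φ u (i+1) = _
    rw [threadP, ih]
    simpa [threadP] using h

lemma ncard_dom_threadP_le {X : Type u} (x0 : X) (φ : (ℕ → X) → ℕ) (u : ℕ → Option X) :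
    ∀ i, (dom (threadP x0 φ u i)).ncard ≤ i := by
  intro i
  induction i with
  | zero =>
    have : dom (threadP x0 φ u 0) = ∅ := by
      ext m; simp [dom, threadP]
    simp [this]
  | succ i ih =>
    rw [threadP]
    cases h : u (φ (ext x0 (threadP x0 φ u i))) with
    | none => simp only [h]; omega
    | some x =>
      simp only [h, dom_upd]
      calc (insert _ (dom (threadP x0 φ u i))).ncard
          ≤ (dom (threadP x0 φ u i)).ncard + 1 := Set.ncard_insert_le _ _
        _ ≤ i + 1 := by omega

theorem stmt5 {X : Type u} (x0 : X) (φ : (ℕ → X) → ℕ) (u v : ℕ → Option X)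
    (hu : (dom u).Finite) (hv : (dom v).Finite)
    (hsub : sub u v) (hSu : isThread x0 φ u) :
    (∀ j ≤ (dom u).ncard, threadP x0 φ u j = threadP x0 φ v j) ∧
    threadP x0 φ v (dom u).ncard = u := by
  set N := (dom u).ncard with hN
  have key : ∀ j < N, u (φ (ext x0 (threadP x0 φ u j))) ≠ none := by
    intro j hj hnone
    have hstep : threadP x0 φ u (j+1) = threadP x0 φ u j := by
      rw [threadP]; simp [hnone]
    have := threadP_stable x0 φ u j hstep N (le_of_lt hj)
    have hu_eq : u = threadP x0 φ u j := by
      rw [isThread] at hSu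
      conv_lhs => rw [hSu]
      rw [← hN]
      exact this
    have hle := ncard_dom_threadP_le x0 φ u j
    rw [← hu_eq] at hle
    omega
  have main : ∀ j ≤ N, threadP x0 φ u j = threadP x0 φ v j := by
    intro j hj
    induction j with
    | zero => rfl
    | succ j ih =>
      have hj' : j < N := hj
      have ihj := ih (le_of_lt hj')
      rw [threadP, threadP, ← ihj]
      cases h : u (φ (ext x0 (threadP x0 φ u j))) with
      | none => exact absurd h (key j hj')
      | some x =>
        have hv' : v (φ (ext x0 (threadP x0 φ u j))) = some x := hsub _ _ h
        simp [h, hv']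
  refine ⟨main, ?_⟩
  rw [← main N le_rfl]
  rw [isThread] at hSu
  exact hSu.symm
end

section
/- sSpec implies Spec (with type change X ↦ X × Bool): assume that for all θ : (ℕ → X × Bool) → ℕ and all β : ℕ → X × Bool there exists n such that θ applied to the canonical extension of the θ-thread of β of length n lies in the domain of that thread. Then for all φ : (ℕ → X) → ℕ and all α : ℕ → X there exists N with φ(canonical extension of the first N values of α) < N. -/
open scoped Classical

universe u

theorem stmt8 {X : Type u} (x0 : X)
    (hs : ∀ (θ : (ℕ → X × Bool) → ℕ) (β : ℕ → X × Bool), ∃ n,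
      θ (ext (x0, false) (threadT (x0, false) θ β n)) ∈
        dom (threadT (x0, false) θ β n)) :
    ∀ (φ : (ℕ → X) → ℕ) (α : ℕ → X),
      ∃ N, φ (fun i => if i < N then α i else x0) < N := by
  intro φ α
  by_contra hcon
  push_neg at hcon
  set β : ℕ → X × Bool := fun n => (α n, true) with hβ
  set θ : (ℕ → X × Bool) → ℕ :=
    fun g => mu (φ (fun n => (g n).1)) (fun i => (g i).2 = false) with hθ
  have hθval : ∀ m, θ (fun i => if i < m then (α i, true) else (x0, false)) = m := by
    intro m
    have hb : m ≤ φ (fun i => if i < m then α i else x0) := hcon m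
    have hfst : (fun n => ((fun i => if i < m then (α i, true) else (x0, false)) n).1)
        = fun i => if i < m then α i else x0 := by
      funext i; by_cases hi : i < m <;> simp [hi]
    have hp : ∀ i, ((fun j => if j < m then (α j, true) else (x0, false)) i).2 = false ↔ ¬ i < m := by
      intro i; by_cases hi : i < m <;> simp [hi]
    rw [hθ]
    simp only [mu, hfst]
    have hex : ∃ i, i ≤ φ (fun i => if i < m then α i else x0) ∧
        ((fun j => if j < m then (α j, true) else (x0, false)) i).2 = false :=
      ⟨m, hb, by simp⟩
    rw [dif_pos hex]
    rw [Nat.find_eq_iff hex]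
    refine ⟨⟨hb, by simp⟩, ?_⟩
    intro k hk
    intro hcontra
    exact absurd ((hp k).1 hcontra.2) (by simpa using hk)
  have key : ∀ m, threadT (x0, false) θ β m
      = fun i => if i < m then some (α i, true) else none := by
    intro m
    induction m with
    | zero => funext i; simp [threadT]
    | succ m ih =>
      have hext : ext (x0, false) (fun i => if i < m then some (α i, true) else none)
          = fun i => if i < m then (α i, true) else (x0, false) := by
        funext i; rw [ext]; by_cases hi : i < m <;> simp [hi]
      funext i
      show (threadT (x0, false) θ β (m + 1)) i = _
      rw [threadT]
      simp only [ih]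
      simp only [hext, hθval m, hβ, upd, merge, single]
      rcases lt_trichotomy i m with hi | hi | hi
      · simp [hi, Nat.lt_succ_of_lt hi, Option.elim]
      · subst hi; simp [Option.elim]
      · have h1 : ¬ i < m := Nat.lt_asymm hi
        have h2 : ¬ i < m + 1 := by omega
        have h3 : i ≠ m := by omega
        simp [h1, h2, h3, Option.elim]
  obtain ⟨n, hn⟩ := hs θ β
  rw [key n] at hn
  have hext : ext (x0, false) (fun i => if i < n then some (α i, true) else none)
      = fun i => if i < n then (α i, true) else (x0, false) := by
    funext i; rw [ext]; by_cases hi : i < n <;> simp [hi]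
  rw [hext, hθval n] at hn
  simp [dom] at hn
end

section
/- In the setting of the proof that sSpec implies Spec: let α : ℕ → X, φ : (ℕ → X) → ℕ, define α̃(n) = (α(n), 1) in X × Bool and θ(β) = the least i ≤ φ(π₀ ∘ β) with π₁(β(i)) = 0, else that bound. Let N be the least number such that θ(extension of [α̃]^θ_N) ∈ dom([α̃]^θ_N). Then for all m ≤ N, dom([α̃]^θ_m) = {0, …, m−1}, and for all m < N, φ(canonical extension of the first m values of α) ≥ m. -/
open scoped Classical

universe u

private lemma mu_ge_eval (b m : ℕ) (hmb : m ≤ b) : mu b (fun i => m ≤ i) = m := by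
  have h : ∃ i, i ≤ b ∧ m ≤ i := ⟨m, hmb, le_refl m⟩
  have key : ∀ (inst : DecidablePred fun i => i ≤ b ∧ m ≤ i), @Nat.find _ inst h = m := by
    intro inst
    rw [Nat.find_eq_iff]
    exact ⟨⟨hmb, le_refl m⟩, fun n hn hc => by omega⟩
  rw [mu, dif_pos h]
  exact key _

private lemma mu_lt_eval (b m : ℕ) (hmb : b < m) : mu b (fun i => m ≤ i) = b := by
  rw [mu, dif_neg]
  rintro ⟨i, hib, hmi⟩
  omega

theorem stmt9 {X : Type u} (x0 : X) (φ : (ℕ → X) → ℕ) (α : ℕ → X)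
    (atil : ℕ → X × Bool) (hatil : atil = fun n => (α n, true))
    (θ : (ℕ → X × Bool) → ℕ)
    (hθ : θ = fun β => mu (φ (fun k => (β k).1)) (fun i => (β i).2 = false))
    (N : ℕ)
    (hN : θ (ext (x0, false) (threadT (x0, false) θ atil N)) ∈
            dom (threadT (x0, false) θ atil N))
    (hNmin : ∀ m < N,
      θ (ext (x0, false) (threadT (x0, false) θ atil m)) ∉
        dom (threadT (x0, false) θ atil m)) :
    (∀ m ≤ N, dom (threadT (x0, false) θ atil m) = {k | k < m}) ∧
    (∀ m < N, m ≤ φ (fun i => if i < m then α i else x0)) := by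
  subst hatil
  set atil : ℕ → X × Bool := fun n => (α n, true) with hatil
  -- the shape of threads
  set F : ℕ → ℕ → Option (X × Bool) :=
    fun m k => if k < m then some (α k, true) else none with hF
  have hext : ∀ m, ext (x0, false) (F m) =
      fun k => if k < m then (α k, true) else (x0, false) := by
    intro m
    funext k
    simp only [ext, hF]
    split <;> simp_all
  have hθval : ∀ m, θ (ext (x0, false) (F m)) =
      mu (φ (fun i => if i < m then α i else x0)) (fun i => m ≤ i) := by
    intro m
    rw [hext m, hθ]
    have h1 : (fun k => ((if k < m then (α k, true) else (x0, false)) : X × Bool).1)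
        = fun i => if i < m then α i else x0 := by
      funext k; split <;> simp_all
    have h2 : (fun i => ((if i < m then (α i, true) else (x0, false)) : X × Bool).2 = false)
        = fun i => m ≤ i := by
      funext i
      by_cases h : i < m <;> simp [h] <;> omega
    simp only [h1, h2]
  have hdomF : ∀ m, dom (F m) = {k | k < m} := by
    intro m
    ext k
    simp only [dom, hF, Set.mem_setOf_eq]
    split <;> simp_all
  -- the key bound
  have stepb : ∀ m, m < N → threadT (x0, false) θ atil m = F m →
      m ≤ φ (fun i => if i < m then α i else x0) := by
    intro m hm heq
    by_contra hb
    push_neg at hb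
    have := hNmin m hm
    rw [heq, hθval m, hdomF m, mu_lt_eval _ _ hb] at this
    exact this hb
  have key : ∀ m, m ≤ N → threadT (x0, false) θ atil m = F m := by
    intro m
    induction m with
    | zero =>
      intro _
      funext k
      simp [threadT, hF]
    | succ m ih =>
      intro hle
      have hmN : m < N := lt_of_lt_of_le (Nat.lt_succ_self m) hle
      have hm := ih hmN.le
      have hb := stepb m hmN hm
      have hθm : θ (ext (x0, false) (threadT (x0, false) θ atil m)) = m := by
        rw [hm, hθval m, mu_ge_eval _ _ hb]
      show upd (threadT (x0, false) θ atil m)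
          (θ (ext (x0, false) (threadT (x0, false) θ atil m)))
          (atil (θ (ext (x0, false) (threadT (x0, false) θ atil m)))) = F (m + 1)
      rw [hθm, hm]
      funext k
      simp only [upd, merge, single, hF, hatil]
      by_cases h1 : k < m
      · simp [h1, Nat.lt_succ_of_lt h1]
      · by_cases h2 : k = m
        · subst h2
          simp [h1]
        · have : ¬ k < m + 1 := by omega
          simp [h1, h2, this]
  constructor
  · intro m hm
    rw [key m hm, hdomF m]
  · intro m hm
    exact stepb m hm (key m hm.le)
end

section
/- For the map η from finite sequences over X to finite partial functions ℕ →. (X × Bool), defined by (η s)(n) = (s_n, true) for n < |s| and undefined otherwise, and the control functional φ̃(α) := least i ≤ φ(π₀ ∘ α) with π₁(α(i)) = false (else that bound): φ̃(canonical extension of η s) equals φ(ŝ) if φ(ŝ) < |s|, and equals |s| otherwise. Consequently, φ(ŝ) < |s| if and only if φ̃(extension of η s) ∈ dom(η s). -/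
open scoped Classical

universe u

lemma mu_eq (b L : ℕ) (p : ℕ → Prop) (hp : ∀ i, p i ↔ L ≤ i) :
    mu b p = if b < L then b else L := by
  unfold mu
  split_ifs with h hlt hlt
  · obtain ⟨i, hib, hi⟩ := h
    exact absurd hlt (not_lt.2 (((hp i).1 hi).trans hib))
  · refine le_antisymm (Nat.find_le ⟨not_lt.1 hlt, (hp L).2 le_rfl⟩) ?_
    exact (hp _).1 (Nat.find_spec h).2
  · rfl
  · exact absurd ⟨L, not_lt.1 hlt, (hp L).2 le_rfl⟩ h

theorem stmt16 {X : Type u} (x0 : X) (φ : (ℕ → X) → ℕ)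
    (η : List X → ℕ → Option (X × Bool))
    (hη : η = fun s n => (s[n]?).map (fun x => (x, true)))
    (φt : (ℕ → X × Bool) → ℕ)
    (hφt : φt = fun β => mu (φ (fun k => (β k).1)) (fun i => (β i).2 = false)) :
    ∀ s : List X,
      (φt (ext (x0, false) (η s)) =
        if φ (fun i => s.getD i x0) < s.length then φ (fun i => s.getD i x0)
        else s.length) ∧
      (φ (fun i => s.getD i x0) < s.length ↔
        φt (ext (x0, false) (η s)) ∈ dom (η s)) := by
  intro s
  subst hη hφt
  have hfst : (fun k => (ext (x0, false)
      ((fun (s : List X) n => (s[n]?).map (fun x => (x, true))) s) k).1)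
      = fun i => s.getD i x0 := by
    funext k
    simp only [ext]
    rcases lt_or_ge k s.length with h | h
    · rw [List.getElem?_eq_getElem h]
      simp [List.getD_eq_getElem?_getD, List.getElem?_eq_getElem h]
    · rw [List.getElem?_eq_none h]
      simp [List.getD_eq_getElem?_getD, List.getElem?_eq_none h]
  have hsnd : ∀ i, ((ext (x0, false)
      ((fun (s : List X) n => (s[n]?).map (fun x => (x, true))) s) i).2 = false)
      ↔ s.length ≤ i := by
    intro i
    simp only [ext]
    rcases lt_or_ge i s.length with h | h
    · rw [List.getElem?_eq_getElem h]
      simp [h.not_ge]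
    · rw [List.getElem?_eq_none h]
      simp [h]
  have hval : (fun β : ℕ → X × Bool =>
        mu (φ (fun k => (β k).1)) (fun i => (β i).2 = false))
      (ext (x0, false) ((fun (s : List X) n => (s[n]?).map (fun x => (x, true))) s))
      = if φ (fun i => s.getD i x0) < s.length then φ (fun i => s.getD i x0)
        else s.length := by
    show mu _ _ = _
    rw [hfst]
    exact mu_eq _ s.length _ hsnd
  refine ⟨hval, ?_⟩
  rw [hval]
  have hdom : ∀ n, n ∈ dom ((fun (s : List X) n =>
      (s[n]?).map (fun x => (x, true))) s) ↔ n < s.length := by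
    intro n
    simp [dom, Option.map_eq_none_iff, List.getElem?_eq_none_iff, not_le]
  constructor
  · intro h
    rw [if_pos h, hdom]
    exact h
  · intro h
    by_contra hlt
    rw [if_neg hlt, hdom] at h
    exact lt_irrefl _ h
end

section
/- If u ⊑ v, S_φ(u) holds, and every point of dom(v) \ dom(u) is updated in the order of the φ-thread of v (formally: v is a φ-thread with |dom(v)| ≥ |dom(u)|), then u(i) = v(i) for every i ∈ dom(u); moreover if all update points n_k, n_{k+1}, …, n_{l−1} of the φ-thread construction of v beyond stage k exceed a number m, then the restrictions of [v]_k and v to {0,…,m} coincide. -/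
open scoped Classical

universe u

/-- Bounded search: least `i ≤ b` with `p i`, else `b`. -/

lemma upd_ne {X : Type u} (f : ℕ → Option X) (n : ℕ) (x : X) {i : ℕ} (h : i ≠ n) :
    upd f n x i = f i := by
  unfold upd merge single
  cases f i <;> simp [h]

lemma upd_self {X : Type u} (f : ℕ → Option X) (n : ℕ) (x : X) (h : f n = some x) :
    upd f n x = f := by
  funext i
  by_cases hi : i = n
  · subst hi
    unfold upd merge single
    rw [h]
    simp
  · exact upd_ne f n x hi

lemma threadP_succ_ne {X : Type u} (x0 : X) (φ : (ℕ → X) → ℕ) (v : ℕ → Option X)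
    (j i : ℕ) (h : i ≠ φ (ext x0 (threadP x0 φ v j))) :
    threadP x0 φ v (j + 1) i = threadP x0 φ v j i := by
  rw [threadP]
  cases hv : v (φ (ext x0 (threadP x0 φ v j))) with
  | none => simp [hv]
  | some x => simp [hv, upd_ne _ _ _ h]

lemma threadP_stab {X : Type u} (x0 : X) (φ : (ℕ → X) → ℕ) (v : ℕ → Option X)
    (hSv : isThread x0 φ v) (d : ℕ) :
    threadP x0 φ v ((dom v).ncard + d) = v := by
  induction d with
  | zero => exact hSv.symm
  | succ d ih =>
    show threadP x0 φ v ((dom v).ncard + d + 1) = v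
    rw [threadP, ih]
    cases hv : v (φ (ext x0 v)) with
    | none => simp [hv]
    | some x => simp [hv, upd_self _ _ _ hv]

theorem stmt17 {X : Type u} (x0 : X) (φ : (ℕ → X) → ℕ) (u v : ℕ → Option X)
    (hu : (dom u).Finite) (hv : (dom v).Finite)
    (hsub : sub u v) (hSu : isThread x0 φ u) (hSv : isThread x0 φ v)
    (hcard : (dom u).ncard ≤ (dom v).ncard) :
    (∀ i ∈ dom u, u i = v i) ∧
    (∀ k m : ℕ,
      (∀ j, k ≤ j → j < (dom v).ncard → m < φ (ext x0 (threadP x0 φ v j))) →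
      ∀ i ≤ m, threadP x0 φ v k i = v i) := by
  constructor
  · intro i hi
    simp only [dom, Set.mem_setOf_eq] at hi
    cases hui : u i with
    | none => exact absurd hui hi
    | some x => rw [hsub i x hui]
  · intro k m h i him
    have key : ∀ d, k + d ≤ (dom v).ncard → threadP x0 φ v (k + d) i = threadP x0 φ v k i := by
      intro d
      induction d with
      | zero => intro _; rfl
      | succ d ih =>
        intro hd
        have hd' : k + d < (dom v).ncard := by omega
        have := h (k + d) (by omega) hd'
        rw [show k + (d + 1) = (k + d) + 1 by omega,
          threadP_succ_ne x0 φ v (k + d) i (by omega), ih (by omega)]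
    by_cases hk : k ≤ (dom v).ncard
    · have h1 := key ((dom v).ncard - k) (by omega)
      rw [show k + ((dom v).ncard - k) = (dom v).ncard + 0 by omega,
        threadP_stab x0 φ v hSv 0] at h1
      exact h1.symm
    · rw [show k = (dom v).ncard + (k - (dom v).ncard) by omega,
        threadP_stab x0 φ v hSv]
end

section
/- Termination bound for demand-driven recursion: let φ : (ℕ → X) → ℕ and α : ℕ → X be given, and suppose θ : (ℕ →. X) → ℕ satisfies θ(u) = 0 if φ(û) ∈ dom(u) and θ(u) = 1 + θ(u ⊕ (φ(û), α(φ(û)))) otherwise. Then there exists n ≤ θ(∅) such that φ(canonical extension of the φ-thread of α of length n) ∈ dom(φ-thread of α of length n). -/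
open scoped Classical

universe u

theorem stmt19 {X : Type u} (x0 : X) (φ : (ℕ → X) → ℕ) (α : ℕ → X)
    (θ : (ℕ → Option X) → ℕ)
    (hθ : ∀ u : ℕ → Option X, (dom u).Finite →
      (φ (ext x0 u) ∈ dom u → θ u = 0) ∧
      (φ (ext x0 u) ∉ dom u →
        θ u = 1 + θ (upd u (φ (ext x0 u)) (α (φ (ext x0 u)))))) :
    ∃ n ≤ θ (fun _ => none),
      φ (ext x0 (threadT x0 φ α n)) ∈ dom (threadT x0 φ α n) := by
  have hfin : ∀ n, (dom (threadT x0 φ α n)).Finite := by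
    intro n
    induction n with
    | zero =>
      convert Set.finite_empty
      ext m; simp [dom, threadT]
    | succ n ih =>
      apply Set.Finite.subset (ih.union (Set.finite_singleton (φ (ext x0 (threadT x0 φ α n)))))
      intro m hm
      simp only [dom, threadT, upd, merge, single, Set.mem_setOf_eq] at hm
      by_cases h : threadT x0 φ α n m = none
      · simp [h] at hm
        exact Or.inr hm
      · exact Or.inl h
  have key : ∀ m n, θ (threadT x0 φ α n) = m →
      ∃ k, k ≤ n + m ∧ φ (ext x0 (threadT x0 φ α k)) ∈ dom (threadT x0 φ α k) := by
    intro m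
    induction m with
    | zero =>
      intro n hn
      refine ⟨n, by omega, ?_⟩
      by_contra h
      have := (hθ _ (hfin n)).2 h
      omega
    | succ m ih =>
      intro n hn
      by_cases h : φ (ext x0 (threadT x0 φ α n)) ∈ dom (threadT x0 φ α n)
      · exact ⟨n, by omega, h⟩
      · have h2 := (hθ _ (hfin n)).2 h
        have hstep : threadT x0 φ α (n + 1) =
            upd (threadT x0 φ α n) (φ (ext x0 (threadT x0 φ α n)))
              (α (φ (ext x0 (threadT x0 φ α n)))) := rfl
        rw [← hstep] at h2
        have : θ (threadT x0 φ α (n + 1)) = m := by omega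
        obtain ⟨k, hk, hk2⟩ := ih (n + 1) this
        exact ⟨k, by omega, hk2⟩
  have h0 : threadT x0 φ α 0 = (fun _ => none : ℕ → Option X) := rfl
  obtain ⟨k, hk, hk2⟩ := key (θ (fun _ => none)) 0 (by rw [h0])
  exact ⟨k, by omega, hk2⟩
end
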